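/- Let G be a group, φ an automorphism of G, and H a subgroup of G fixed pointwise by φ. Then the set of right cosets H\G with operation (Hx) ∗ (Hy) = H φ(x y⁻¹) y is a quandle: it satisfies idempotence, bijectivity of right translations, and right self-distributivity. -/

import Mathlib

/-- The setoid of right cosets of a subgroup `H` of `G`: `x ∼ x'` iff `Hx = Hx'`. -/
def rightCosetSetoid (G : Type*) [Group G] (H : Subgroup G) : Setoid G where
  r x x' := x' * x⁻¹ ∈ H
  iseqv := by
    constructor
    · intro x; simpa using H.one_mem
    · intro x y h; simpa using H.inv_mem h
    · intro x y z h1 h2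
      have := H.mul_mem h2 h1
      simpa [mul_assoc] using this

/-! The map `(x, y) ↦ φ(x y⁻¹) y` satisfies the quandle axioms on `G` by direct computation, with
inverse right translations given by `φ⁻¹` in place of `φ`. Since `φ` fixes `H` pointwise,
`φ(h x (k y)⁻¹) k y = h φ(x y⁻¹) y` for `h, k ∈ H`, so the operation descends to right cosets. -/

open Quandles

section GenAlexander

variable {G F : Type*} [Group G] [FunLike F G G] [MonoidHomClass F G G]

def genAlexanderOp (φ : F) (x y : G) : G := φ (x * y⁻¹) * y

@[simp]
theorem genAlexanderOp_self (φ : F) (x : G) : genAlexanderOp φ x x = x := by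
  simp [genAlexanderOp]

theorem genAlexanderOp_right_distrib (φ : F) (x y z : G) :
    genAlexanderOp φ (genAlexanderOp φ x y) z =
      genAlexanderOp φ (genAlexanderOp φ x z) (genAlexanderOp φ y z) := by
  simp only [genAlexanderOp, map_mul, map_inv]
  group

theorem genAlexanderOp_mul_mul {H : Subgroup G} {φ : F} (hφ : ∀ h ∈ H, φ h = h) {h k : G}
    (hh : h ∈ H) (hk : k ∈ H) (x y : G) :
    genAlexanderOp φ (h * x) (k * y) = h * genAlexanderOp φ x y := by
  simp only [genAlexanderOp, mul_inv_rev, map_mul, map_inv, hφ h hh, hφ k hk]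
  group

theorem genAlexanderOp_symm_op (φ : G ≃* G) (x y : G) :
    genAlexanderOp φ.symm (genAlexanderOp φ x y) y = x := by
  simp [genAlexanderOp]

theorem genAlexanderOp_op_symm (φ : G ≃* G) (x y : G) :
    genAlexanderOp φ (genAlexanderOp φ.symm x y) y = x := by
  simp [genAlexanderOp]

end GenAlexander

section Cosets

variable {G F : Type*} [Group G] [FunLike F G G] [MonoidHomClass F G G] (H : Subgroup G)

theorem genAlexanderOp_rightCoset_rel {φ : F} (hφ : ∀ h ∈ H, φ h = h) {x x' y y' : G}
    (hx : (rightCosetSetoid G H).r x x') (hy : (rightCosetSetoid G H).r y y') :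
    (rightCosetSetoid G H).r (genAlexanderOp φ x y) (genAlexanderOp φ x' y') := by
  obtain ⟨h, hh, rfl⟩ : ∃ h ∈ H, x' = h * x := ⟨x' * x⁻¹, hx, by group⟩
  obtain ⟨k, hk, rfl⟩ : ∃ k ∈ H, y' = k * y := ⟨y' * y⁻¹, hy, by group⟩
  change genAlexanderOp φ (h * x) (k * y) * (genAlexanderOp φ x y)⁻¹ ∈ H
  rwa [genAlexanderOp_mul_mul hφ hh hk, mul_inv_cancel_right]

def rightCosetOp (φ : F) (hφ : ∀ h ∈ H, φ h = h) :
    Quotient (rightCosetSetoid G H) → Quotient (rightCosetSetoid G H) →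
      Quotient (rightCosetSetoid G H) :=
  Quotient.map₂ (genAlexanderOp φ) fun _ _ hx _ _ hy => genAlexanderOp_rightCoset_rel H hφ hx hy

/-- Mathlib's racks act on the left, so the coset `a ∗ b` of the paper is `b ◃ a` here. -/
abbrev rightCosetQuandle (φ : G ≃* G) (hφ : ∀ h ∈ H, φ h = h) :
    Quandle (Quotient (rightCosetSetoid G H)) where
  act b a := rightCosetOp H φ hφ a b
  self_distrib {c b a} := Quotient.inductionOn₃ a b c fun x y z =>
    congrArg (Quotient.mk _) (genAlexanderOp_right_distrib φ x y z)
  invAct b a := rightCosetOp H φ.symm (fun h hh => φ.symm_apply_eq.mpr (hφ h hh).symm) a b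
  left_inv b a := Quotient.inductionOn₂ a b fun x y =>
    congrArg (Quotient.mk _) (genAlexanderOp_symm_op φ x y)
  right_inv b a := Quotient.inductionOn₂ a b fun x y =>
    congrArg (Quotient.mk _) (genAlexanderOp_op_symm φ x y)
  fix {a} := Quotient.inductionOn a fun x => congrArg (Quotient.mk _) (genAlexanderOp_self φ x)

end Cosets

/-- The set of right cosets `H\G`, with the operation `(Hx) ∗ (Hy) = H φ(x y⁻¹) y`,
is a quandle: there is a well-defined binary operation given by this formula on
representatives, and it satisfies idempotence, bijectivity of right translations,
and right self-distributivity. -/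
theorem quotient_genAlexander_is_quandle (G : Type*) [Group G] (φ : G ≃* G)
    (H : Subgroup G) (hφ : ∀ h ∈ H, φ h = h) :
    ∃ op : Quotient (rightCosetSetoid G H) → Quotient (rightCosetSetoid G H) →
        Quotient (rightCosetSetoid G H),
      (∀ x y : G, op (Quotient.mk _ x) (Quotient.mk _ y) =
          Quotient.mk _ (φ (x * y⁻¹) * y)) ∧
      (∀ a, op a a = a) ∧
      (∀ b, Function.Bijective (fun a => op a b)) ∧
      (∀ a b c, op (op a b) c = op (op a c) (op b c)) := by
  let := rightCosetQuandle H φ hφ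
  exact ⟨fun a b => b ◃ a, fun _ _ => rfl, fun _ => Quandle.fix,
    fun b => (Rack.act' b).bijective, fun _ _ _ => Rack.self_distrib⟩
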